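/- arXiv:1802.03669 — 4 statements merged into one kernel-verified Lean document; each statement's English description precedes it below -/
import Mathlib

section
/- (Lemma 1) In any environment with at least one country, for every strategy matrix U (not necessarily an equilibrium) there exists at least one country i that survives under U, i.e. σ_i(U) ≥ τ_i(U); it can never be the case that every country is unsafe. -/
open Finset

/-- A networked environment: friend sets, adversary sets and powers. -/
structure Env (n : ℕ) where
  F : Fin n → Finset (Fin n)
  A : Fin n → Finset (Fin n)
  p : Fin n → ℝ
  self_friend : ∀ i, i ∈ F i
  disj : ∀ i, Disjoint (F i) (A i)
  F_symm : ∀ i j, j ∈ F i ↔ i ∈ F j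
  A_symm : ∀ i j, j ∈ A i ↔ i ∈ A j
  p_nonneg : ∀ i, 0 ≤ p i

/-- `U` is a strategy matrix for environment `E`. -/
def IsStrat {n : ℕ} (E : Env n) (U : Fin n → Fin n → ℝ) : Prop :=
  (∀ i j, 0 ≤ U i j) ∧ (∀ i, ∑ j, U i j = E.p i) ∧
    (∀ i j, j ∉ E.F i → j ∉ E.A i → U i j = 0)

/-- Total support `σ_i(U)`. -/
def totalSupport {n : ℕ} (E : Env n) (U : Fin n → Fin n → ℝ) (i : Fin n) : ℝ :=
  (∑ j ∈ E.F i, U j i) + ∑ j ∈ E.A i, U i j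

/-- Total threat `τ_i(U)`. -/
def totalThreat {n : ℕ} (E : Env n) (U : Fin n → Fin n → ℝ) (i : Fin n) : ℝ :=
  ∑ j ∈ E.A i, U j i

/-- Country `i` survives under `U` (is safe or precarious). -/
def Survives {n : ℕ} (E : Env n) (U : Fin n → Fin n → ℝ) (i : Fin n) : Prop :=
  totalThreat E U i ≤ totalSupport E U i

open Classical in
/-- Country `i`'s utility `f_i(U)` given pairwise utilities `tF1 ≥ tF0`, `tA1 ≥ tA0`. -/
noncomputable def utility {n : ℕ} (E : Env n) (tF1 tF0 tA1 tA0 : Fin n → Fin n → ℝ)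
    (U : Fin n → Fin n → ℝ) (i : Fin n) : ℝ :=
  if totalSupport E U i < totalThreat E U i then tF0 i i
  else (∑ j ∈ E.F i, if totalThreat E U j ≤ totalSupport E U j then tF1 i j else tF0 i j)
     + ∑ j ∈ E.A i, if totalSupport E U j ≤ totalThreat E U j then tA1 i j else tA0 i j

/-- `U` is a (pure strategy) Nash equilibrium of the power allocation game. -/
noncomputable def IsNash {n : ℕ} (E : Env n) (tF1 tF0 tA1 tA0 : Fin n → Fin n → ℝ)
    (U : Fin n → Fin n → ℝ) : Prop :=
  IsStrat E U ∧ ∀ (i : Fin n) (v : Fin n → ℝ), (∀ j, 0 ≤ v j) → (∑ j, v j = E.p i) →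
    (∀ j, j ∉ E.F i → j ∉ E.A i → v j = 0) →
    utility E tF1 tF0 tA1 tA0 (Function.update U i v) i ≤ utility E tF1 tF0 tA1 tA0 U i

/-- Country `i`'s optimal welfare: the sup of its utility over all strategy matrices. -/
noncomputable def optWelfare {n : ℕ} (E : Env n) (tF1 tF0 tA1 tA0 : Fin n → Fin n → ℝ)
    (i : Fin n) : ℝ :=
  sSup {x | ∃ U, IsStrat E U ∧ x = utility E tF1 tF0 tA1 tA0 U i}

/-!
Summed over all countries, every allocation `u_ij` to an adversary counts once as support of `i`
and once as threat against `j`. So total support exceeds total threat by the (nonnegative) total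
allocation to friends, and some country's support is at least its threat.
-/

theorem Finset.sum_sum_comm_of_symm {ι M : Type*} [Fintype ι] [AddCommMonoid M]
    (S : ι → Finset ι) (hS : ∀ i j, j ∈ S i ↔ i ∈ S j) (f : ι → ι → M) :
    ∑ i, ∑ j ∈ S i, f i j = ∑ i, ∑ j ∈ S i, f j i :=
  Finset.sum_comm' fun i j => by simp [hS i j]

theorem sum_totalThreat_le_sum_totalSupport {n : ℕ} (E : Env n) {U : Fin n → Fin n → ℝ}
    (hU : ∀ i j, 0 ≤ U i j) :
    ∑ i, totalThreat E U i ≤ ∑ i, totalSupport E U i := by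
  unfold totalSupport totalThreat
  rw [sum_add_distrib, Finset.sum_sum_comm_of_symm E.A E.A_symm U]
  exact le_add_of_nonneg_left (sum_nonneg fun i _ => sum_nonneg fun j _ => hU j i)

/-- Lemma 1: under any strategy matrix at least one country survives. -/
theorem exists_survivor {n : ℕ} (hn : 0 < n) (E : Env n) (U : Fin n → Fin n → ℝ)
    (hU : IsStrat E U) :
    ∃ i : Fin n, Survives E U i := by
  obtain ⟨i, -, hi⟩ := exists_le_of_sum_le (univ_nonempty_iff.mpr ⟨⟨0, hn⟩⟩)
    (sum_totalThreat_le_sum_totalSupport E hU.1)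
  exact ⟨i, hi⟩
end

section
/- (Theorem 3, sufficient condition for the paradox) Let N be a finite set of n ≥ 3 countries with powers p_k ≥ 0, and suppose there are two distinct countries i and j with p_i > 0 such that t_ij^A(1) > t_ij^F(1) and p_i + p_j ≤ Σ_{k∈N, k∉{i,j}} p_k. Then there exist two environments Γ and Γ̄ on N with these powers, identical except that j is a friend of i in Γ and an adversary of i in Γ̄ (namely: in Γ, country i is a friend of every country, every country other than i is an adversary of j, and there are no other relations; Γ̄ is the same except that i is an adversary of j), such that country i's optimal welfare satisfies f*_i(Γ) < f*_i(Γ̄); i.e. having the additional friend j strictly decreases country i's optimal welfare. -/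
/-! In `Γ` country `i` has no adversaries, so it can never be unsafe and its welfare is capped
by `Σ_l t_il^F(1)`, which it attains when every country keeps its power at home. In `Γ̄` the
countries outside `{i, j}` can pour all their power into threatening `j`; since
`p_j ≤ p_i + p_j ≤ Σ_{k ∉ {i,j}} p_k`, `j` cannot survive that threat, while nobody else is
threatened. So `i` collects `t_ij^A(1)` from `j` instead of `t_ij^F(1)`, and keeps `t_il^F(1)`
from every other country. -/

open Finset

section General

variable {n : ℕ} (E : Env n) {U : Fin n → Fin n → ℝ} {i : Fin n}
  {tF1 tF0 tA1 tA0 : Fin n → Fin n → ℝ}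

theorem totalSupport_nonneg (hU : ∀ k l, 0 ≤ U k l) (k : Fin n) : 0 ≤ totalSupport E U k :=
  add_nonneg (sum_nonneg fun l _ => hU l k) (sum_nonneg fun l _ => hU k l)

theorem survives_of_totalThreat_eq_zero (hU : ∀ k l, 0 ≤ U k l) (h : totalThreat E U i = 0) :
    Survives E U i := by
  rw [Survives, h]
  exact totalSupport_nonneg E hU i

theorem survives_of_adversaries_eq_empty (hU : ∀ k l, 0 ≤ U k l) (hA : E.A i = ∅) :
    Survives E U i :=
  survives_of_totalThreat_eq_zero E hU (by simp [totalThreat, hA])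

theorem utility_le_of_survives (hF : ∀ l ∈ E.F i, tF0 i l ≤ tF1 i l)
    (hA : ∀ l ∈ E.A i, tA0 i l ≤ tA1 i l)
    (hi : Survives E U i) :
    utility E tF1 tF0 tA1 tA0 U i ≤ (∑ l ∈ E.F i, tF1 i l) + ∑ l ∈ E.A i, tA1 i l := by
  rw [utility, if_neg (not_lt.2 hi)]
  gcongr with l hl l hl
  · split_ifs <;> simp [hF l hl]
  · split_ifs <;> simp [hA l hl]

theorem utility_eq_of_survives (hi : Survives E U i)
    (hFl : ∀ l ∈ E.F i, Survives E U l)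
    (hAl : ∀ l ∈ E.A i, totalSupport E U l ≤ totalThreat E U l) :
    utility E tF1 tF0 tA1 tA0 U i = (∑ l ∈ E.F i, tF1 i l) + ∑ l ∈ E.A i, tA1 i l := by
  rw [utility, if_neg (not_lt.2 hi)]
  congr 1
  · exact sum_congr rfl fun l hl => if_pos (hFl l hl)
  · exact sum_congr rfl fun l hl => if_pos (hAl l hl)

theorem bddAbove_utility (hF : ∀ l, tF0 i l ≤ tF1 i l) (hA : ∀ l, tA0 i l ≤ tA1 i l) :
    BddAbove {x | ∃ U, IsStrat E U ∧ x = utility E tF1 tF0 tA1 tA0 U i} := by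
  refine ⟨max (tF0 i i) ((∑ l ∈ E.F i, tF1 i l) + ∑ l ∈ E.A i, tA1 i l), ?_⟩
  rintro x ⟨U, hU, rfl⟩
  by_cases hi : Survives E U i
  · exact (utility_le_of_survives E (fun l _ => hF l) (fun l _ => hA l) hi).trans
      (le_max_right _ _)
  · rw [utility, if_pos (not_le.1 hi)]
    exact le_max_left _ _

theorem utility_le_optWelfare (hF : ∀ l, tF0 i l ≤ tF1 i l) (hA : ∀ l, tA0 i l ≤ tA1 i l)
    (hU : IsStrat E U) : utility E tF1 tF0 tA1 tA0 U i ≤ optWelfare E tF1 tF0 tA1 tA0 i :=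
  le_csSup (bddAbove_utility E hF hA) ⟨U, hU, rfl⟩

def selfStrat : Fin n → Fin n → ℝ := fun k l => if k = l then E.p l else 0

theorem isStrat_selfStrat : IsStrat E (selfStrat E) := by
  refine ⟨fun k l => ?_, fun k => by simp [selfStrat], fun k l hF _ => ?_⟩
  · unfold selfStrat; split_ifs <;> simp [E.p_nonneg]
  · have hkl : k ≠ l := by rintro rfl; exact hF (E.self_friend k)
    simp [selfStrat, hkl]

theorem totalThreat_selfStrat (k : Fin n) : totalThreat E (selfStrat E) k = 0 := by
  refine sum_eq_zero fun l hl => ?_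
  have hlk : l ≠ k := by
    rintro rfl
    exact disjoint_left.mp (E.disj l) (E.self_friend l) hl
  simp [selfStrat, hlk]

theorem optWelfare_eq_of_adversaries_eq_empty (hF : ∀ l, tF0 i l ≤ tF1 i l)
    (hA : E.A i = ∅) : optWelfare E tF1 tF0 tA1 tA0 i = ∑ l ∈ E.F i, tF1 i l := by
  have hbound :
      ∀ U, IsStrat E U → utility E tF1 tF0 tA1 tA0 U i ≤ ∑ l ∈ E.F i, tF1 i l := by
    intro U hU
    simpa [hA] using utility_le_of_survives E (fun l _ => hF l) (by simp [hA])
      (survives_of_adversaries_eq_empty E hU.1 hA)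
  have hself : utility E tF1 tF0 tA1 tA0 (selfStrat E) i = ∑ l ∈ E.F i, tF1 i l := by
    have hsurv k : Survives E (selfStrat E) k :=
      survives_of_totalThreat_eq_zero E (isStrat_selfStrat E).1 (totalThreat_selfStrat E k)
    simpa [hA] using utility_eq_of_survives E (tF0 := tF0) (tA1 := tA1) (tA0 := tA0)
      (hsurv i) (fun l _ => hsurv l) (by simp [hA])
  refine le_antisymm (csSup_le ⟨_, _, isStrat_selfStrat E, rfl⟩ ?_) ?_
  · rintro x ⟨U, hU, rfl⟩
    exact hbound U hU
  · exact hself ▸ le_csSup ⟨_, by rintro x ⟨U, hU, rfl⟩; exact hbound U hU⟩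
      ⟨_, isStrat_selfStrat E, rfl⟩

end General

section Construction

variable {n : ℕ} (i j : Fin n) (p : Fin n → ℝ) (hp : ∀ k, 0 ≤ p k)

/-- The environment `Γ`. -/
def paradoxEnv (hij : i ≠ j) : Env n where
  F k := univ.filter fun l => k = l ∨ k = i ∨ l = i
  A k := univ.filter fun l => (k = j ∧ l ≠ i ∧ l ≠ j) ∨ (l = j ∧ k ≠ i ∧ k ≠ j)
  p := p
  self_friend k := by simp
  disj k := by
    rw [disjoint_left]
    simp only [mem_filter, mem_univ, true_and]
    grind
  F_symm k l := by simp only [mem_filter, mem_univ, true_and]; tauto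
  A_symm k l := by simp only [mem_filter, mem_univ, true_and]; tauto
  p_nonneg := hp

/-- The environment `Γ̄`. -/
def paradoxEnvBar (hij : i ≠ j) : Env n where
  F k := univ.filter fun l => k = l ∨ (k = i ∧ l ≠ j) ∨ (l = i ∧ k ≠ j)
  A k := univ.filter fun l => (k = j ∧ l ≠ j) ∨ (l = j ∧ k ≠ j)
  p := p
  self_friend k := by simp
  disj k := by
    rw [disjoint_left]
    simp only [mem_filter, mem_univ, true_and]
    grind
  F_symm k l := by simp only [mem_filter, mem_univ, true_and]; tauto
  A_symm k l := by simp only [mem_filter, mem_univ, true_and]; tauto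
  p_nonneg := hp

variable {i j p hp} {hij : i ≠ j}

@[simp]
theorem mem_paradoxEnv_F {k l : Fin n} :
    l ∈ (paradoxEnv i j p hp hij).F k ↔ (k = l ∨ k = i ∨ l = i) := by
  simp [paradoxEnv]

@[simp]
theorem mem_paradoxEnv_A {k l : Fin n} :
    l ∈ (paradoxEnv i j p hp hij).A k ↔
      ((k = j ∧ l ≠ i ∧ l ≠ j) ∨ (l = j ∧ k ≠ i ∧ k ≠ j)) := by
  simp [paradoxEnv]

@[simp]
theorem mem_paradoxEnvBar_F {k l : Fin n} :
    l ∈ (paradoxEnvBar i j p hp hij).F k ↔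
      (k = l ∨ (k = i ∧ l ≠ j) ∨ (l = i ∧ k ≠ j)) := by
  simp [paradoxEnvBar]

@[simp]
theorem mem_paradoxEnvBar_A {k l : Fin n} :
    l ∈ (paradoxEnvBar i j p hp hij).A k ↔ ((k = j ∧ l ≠ j) ∨ (l = j ∧ k ≠ j)) := by
  simp [paradoxEnvBar]

theorem optWelfare_paradoxEnv {tF1 tF0 tA1 tA0 : Fin n → Fin n → ℝ}
    (hF : ∀ l, tF0 i l ≤ tF1 i l) :
    optWelfare (paradoxEnv i j p hp hij) tF1 tF0 tA1 tA0 i = ∑ l, tF1 i l := by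
  have hF_univ : (paradoxEnv i j p hp hij).F i = univ := by ext; simp
  have hA_empty : (paradoxEnv i j p hp hij).A i = ∅ := by ext; simp [hij]
  rw [optWelfare_eq_of_adversaries_eq_empty _ hF hA_empty, hF_univ]

def gangUpStrat (i j : Fin n) (p : Fin n → ℝ) : Fin n → Fin n → ℝ := fun k l =>
  if k = i ∨ k = j then (if k = l then p l else 0) else (if l = j then p k else 0)

theorem isStrat_gangUpStrat : IsStrat (paradoxEnvBar i j p hp hij) (gangUpStrat i j p) := by
  refine ⟨fun k l => ?_, fun k => ?_, fun k l hF hA => ?_⟩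
  · unfold gangUpStrat; split_ifs <;> simp [hp]
  · by_cases hk : k = i ∨ k = j <;> simp [gangUpStrat, hk, paradoxEnvBar]
  · simp only [mem_paradoxEnvBar_F, mem_paradoxEnvBar_A, not_or, not_and, not_not] at hF hA
    grind [gangUpStrat]

theorem totalThreat_gangUpStrat_of_ne {l : Fin n} (hl : l ≠ j) :
    totalThreat (paradoxEnvBar i j p hp hij) (gangUpStrat i j p) l = 0 := by
  have hA : (paradoxEnvBar i j p hp hij).A l = {j} := by ext; simp [hl]
  simp [totalThreat, hA, gangUpStrat, Ne.symm hl]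

theorem totalThreat_gangUpStrat_self :
    totalThreat (paradoxEnvBar i j p hp hij) (gangUpStrat i j p) j
      = ∑ k ∈ univ \ {i, j}, p k := by
  have hA : (paradoxEnvBar i j p hp hij).A j = univ.erase j := by ext; simp
  have hthird : univ \ {i, j} = (univ.erase j).erase i := by ext; simp [and_comm]
  have hi_idle : gangUpStrat i j p i j = 0 := by simp [gangUpStrat, hij]
  rw [totalThreat, hA, ← sum_erase (f := fun k => gangUpStrat i j p k j) _ hi_idle, hthird]
  refine sum_congr rfl fun k hk => ?_
  simp only [mem_erase, mem_univ, and_true] at hk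
  simp [gangUpStrat, hk.1, hk.2]

theorem totalSupport_gangUpStrat_self :
    totalSupport (paradoxEnvBar i j p hp hij) (gangUpStrat i j p) j = p j := by
  have hF : (paradoxEnvBar i j p hp hij).F j = {j} := by ext; simp; grind
  have hA : (paradoxEnvBar i j p hp hij).A j = univ.erase j := by ext; simp
  rw [totalSupport, hF, hA, sum_singleton]
  simp +contextual [gangUpStrat, eq_comm]

theorem utility_gangUpStrat {tF1 tF0 tA1 tA0 : Fin n → Fin n → ℝ}
    (hpow : p i + p j ≤ ∑ k ∈ univ \ {i, j}, p k) :
    utility (paradoxEnvBar i j p hp hij) tF1 tF0 tA1 tA0 (gangUpStrat i j p) i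
      = (∑ l ∈ univ.erase j, tF1 i l) + tA1 i j := by
  have hF : (paradoxEnvBar i j p hp hij).F i = univ.erase j := by ext; simp; grind
  have hA : (paradoxEnvBar i j p hp hij).A i = {j} := by ext; simp [hij]
  have hsurv {l} (hl : l ≠ j) : Survives (paradoxEnvBar i j p hp hij) (gangUpStrat i j p) l :=
    survives_of_totalThreat_eq_zero _ (isStrat_gangUpStrat (hp := hp) (hij := hij)).1
      (totalThreat_gangUpStrat_of_ne hl)
  have hj_falls : totalSupport (paradoxEnvBar i j p hp hij) (gangUpStrat i j p) j
      ≤ totalThreat (paradoxEnvBar i j p hp hij) (gangUpStrat i j p) j := by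
    rw [totalSupport_gangUpStrat_self, totalThreat_gangUpStrat_self]
    linarith [hp i]
  rw [utility_eq_of_survives _ (hsurv hij) (fun l hl => hsurv (by simpa [hF] using hl))
    (by simpa [hA] using hj_falls), hF, hA, sum_singleton]

end Construction

theorem paradox_sufficient_condition_general {n : ℕ} (p : Fin n → ℝ)
    (hp : ∀ k, 0 ≤ p k) (i j : Fin n) (hij : i ≠ j)
    (tF1 tF0 tA1 tA0 : Fin n → Fin n → ℝ)
    (ht : ∀ k l, tF0 k l ≤ tF1 k l ∧ tA0 k l ≤ tA1 k l)
    (htij : tF1 i j < tA1 i j)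
    (hpow : p i + p j ≤ ∑ k ∈ Finset.univ \ {i, j}, p k) :
    ∃ E E' : Env n, E.p = p ∧ E'.p = p ∧
      (∀ k l, l ∈ E.F k ↔ (k = l ∨ k = i ∨ l = i)) ∧
      (∀ k l, l ∈ E.A k ↔ ((k = j ∧ l ≠ i ∧ l ≠ j) ∨ (l = j ∧ k ≠ i ∧ k ≠ j))) ∧
      (∀ k l, l ∈ E'.F k ↔ (k = l ∨ (k = i ∧ l ≠ j) ∨ (l = i ∧ k ≠ j))) ∧
      (∀ k l, l ∈ E'.A k ↔ ((k = j ∧ l ≠ j) ∨ (l = j ∧ k ≠ j))) ∧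
      optWelfare E tF1 tF0 tA1 tA0 i < optWelfare E' tF1 tF0 tA1 tA0 i := by
  refine ⟨paradoxEnv i j p hp hij, paradoxEnvBar i j p hp hij, rfl, rfl,
    fun _ _ => mem_paradoxEnv_F, fun _ _ => mem_paradoxEnv_A,
    fun _ _ => mem_paradoxEnvBar_F, fun _ _ => mem_paradoxEnvBar_A, ?_⟩
  calc optWelfare (paradoxEnv i j p hp hij) tF1 tF0 tA1 tA0 i
      = (∑ l ∈ univ.erase j, tF1 i l) + tF1 i j := by
        rw [optWelfare_paradoxEnv fun l => (ht i l).1, sum_erase_add _ _ (mem_univ j)]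
    _ < (∑ l ∈ univ.erase j, tF1 i l) + tA1 i j := by gcongr
    _ = utility (paradoxEnvBar i j p hp hij) tF1 tF0 tA1 tA0 (gangUpStrat i j p) i :=
        (utility_gangUpStrat hpow).symm
    _ ≤ optWelfare (paradoxEnvBar i j p hp hij) tF1 tF0 tA1 tA0 i :=
        utility_le_optWelfare _ (fun l => (ht i l).1) (fun l => (ht i l).2) isStrat_gangUpStrat

/-- Theorem 3, sufficient condition: if `t_ij^A(1) > t_ij^F(1)` and
`p_i + p_j ≤ Σ_{k ∉ {i,j}} p_k`, then there are two environments `E` (in which `i` is a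
friend of every country, every country other than `i` is an adversary of `j`, and there
are no other relations) and `E'` (the same except `i` is an adversary of `j`) with
`f*_i(E) < f*_i(E')`: the additional friend `j` strictly decreases `i`'s optimal welfare. -/
theorem paradox_sufficient_condition {n : ℕ} (hn : 3 ≤ n) (p : Fin n → ℝ)
    (hp : ∀ k, 0 ≤ p k) (i j : Fin n) (hij : i ≠ j) (hpi : 0 < p i)
    (tF1 tF0 tA1 tA0 : Fin n → Fin n → ℝ)
    (ht : ∀ k l, tF0 k l ≤ tF1 k l ∧ tA0 k l ≤ tA1 k l)
    (htij : tF1 i j < tA1 i j)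
    (hpow : p i + p j ≤ ∑ k ∈ Finset.univ \ {i, j}, p k) :
    ∃ E E' : Env n, E.p = p ∧ E'.p = p ∧
      (∀ k l, l ∈ E.F k ↔ (k = l ∨ k = i ∨ l = i)) ∧
      (∀ k l, l ∈ E.A k ↔ ((k = j ∧ l ≠ i ∧ l ≠ j) ∨ (l = j ∧ k ≠ i ∧ k ≠ j))) ∧
      (∀ k l, l ∈ E'.F k ↔ (k = l ∨ (k = i ∧ l ≠ j) ∨ (l = i ∧ k ≠ j))) ∧
      (∀ k l, l ∈ E'.A k ↔ ((k = j ∧ l ≠ j) ∨ (l = j ∧ k ≠ j))) ∧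
      optWelfare E tF1 tF0 tA1 tA0 i < optWelfare E' tF1 tF0 tA1 tA0 i :=
  paradox_sufficient_condition_general p hp i j hij tF1 tF0 tA1 tA0 ht htij hpow
end

section
/- (Feasibility claim used in the proof of Theorem 3) Let N be a finite set of n ≥ 3 countries with powers p_k ≥ 0, and fix distinct countries i and j with p_i > 0 and p_i + p_j ≤ Σ_{k∈N, k∉{i,j}} p_k. Consider the environment Γ̄ in which every country other than j is an adversary of j, country i is a friend of every country other than j, and there are no other relations. Then there exists a strategy matrix U for Γ̄ under which σ_j(U) ≤ τ_j(U) (country j is unsafe or precarious) while every country k ≠ j survives (σ_k(U) ≥ τ_k(U)). -/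
open Finset

/-!
Let every country spend its whole power on `j`: `j` supports itself, everyone else attacks `j`.
Then nobody but `j` is threatened, so every `k ≠ j` survives. Since all other countries are
adversaries of `j`, its only friend is itself, so `σ_j = p_j`, while `τ_j` is the total power of
the others, which is at least `p_j` by the power hypothesis.
-/

namespace Env

variable {n : ℕ} (E : Env n)

lemma F_eq_singleton_of_forall_mem_A {j : Fin n} (h : ∀ l, l ≠ j → l ∈ E.A j) :
    E.F j = {j} := by
  refine eq_singleton_iff_unique_mem.mpr ⟨E.self_friend j, fun l hl => ?_⟩
  by_contra hlj
  exact disjoint_left.mp (E.disj j) hl (h l hlj)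

def focusOn (j : Fin n) : Fin n → Fin n → ℝ := fun k l => if l = j then E.p k else 0

variable {E}

lemma isStrat_focusOn {j : Fin n} (h : ∀ k, k ≠ j → j ∈ E.A k) : IsStrat E (E.focusOn j) := by
  refine ⟨fun k l => ?_, fun k => by simp [focusOn], fun k l hF hA => ?_⟩
  · unfold focusOn
    split_ifs
    exacts [E.p_nonneg k, le_rfl]
  · rcases eq_or_ne l j with rfl | hl
    · rcases eq_or_ne k l with rfl | hk
      · exact absurd (E.self_friend k) hF
      · exact absurd (h k hk) hA
    · simp [focusOn, hl]

lemma totalThreat_focusOn_of_ne {j k : Fin n} (hk : k ≠ j) :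
    totalThreat E (E.focusOn j) k = 0 :=
  sum_eq_zero fun _ _ => if_neg hk

lemma totalThreat_focusOn_self (j : Fin n) :
    totalThreat E (E.focusOn j) j = ∑ l ∈ E.A j, E.p l :=
  sum_congr rfl fun _ _ => if_pos rfl

lemma totalSupport_focusOn_self (j : Fin n) :
    totalSupport E (E.focusOn j) j = ∑ l ∈ E.F j, E.p l := by
  have hA : ∑ l ∈ E.A j, E.focusOn j j l = 0 := by
    refine sum_eq_zero fun l hl => if_neg ?_
    rintro rfl
    exact disjoint_left.mp (E.disj l) (E.self_friend l) hl
  simp only [totalSupport, hA, add_zero]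
  exact sum_congr rfl fun _ _ => if_pos rfl

lemma totalSupport_nonneg {U : Fin n → Fin n → ℝ} (hU : ∀ k l, 0 ≤ U k l) (k : Fin n) :
    0 ≤ totalSupport E U k :=
  add_nonneg (sum_nonneg fun _ _ => hU _ _) (sum_nonneg fun _ _ => hU _ _)

end Env

theorem feasibility_of_demise_general {n : ℕ} (i j : Fin n)
    (E : Env n)
    (hpow : E.p i + E.p j ≤ ∑ k ∈ Finset.univ \ {i, j}, E.p k)
    (hA : ∀ k l, l ∈ E.A k ↔ ((k = j ∧ l ≠ j) ∨ (l = j ∧ k ≠ j))) :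
    ∃ U, IsStrat E U ∧ totalSupport E U j ≤ totalThreat E U j ∧
      ∀ k, k ≠ j → Survives E U k := by
  have hAj : ∀ l, l ≠ j → l ∈ E.A j := fun l hl => (hA j l).2 (Or.inl ⟨rfl, hl⟩)
  have hjA : ∀ k, k ≠ j → j ∈ E.A k := fun k hk => (hA k j).2 (Or.inr ⟨rfl, hk⟩)
  have hU := Env.isStrat_focusOn hjA
  refine ⟨E.focusOn j, hU, ?_, fun k hk => ?_⟩
  · rw [Env.totalSupport_focusOn_self, Env.totalThreat_focusOn_self,
      E.F_eq_singleton_of_forall_mem_A hAj, sum_singleton]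
    calc E.p j ≤ E.p i + E.p j := le_add_of_nonneg_left (E.p_nonneg i)
      _ ≤ ∑ k ∈ univ \ {i, j}, E.p k := hpow
      _ ≤ ∑ l ∈ E.A j, E.p l := by
        refine sum_le_sum_of_subset_of_nonneg (fun l hl => hAj l ?_) fun l _ _ => E.p_nonneg l
        simp only [mem_sdiff, mem_insert, mem_singleton, not_or] at hl
        exact hl.2.2
  · rw [Survives, Env.totalThreat_focusOn_of_ne hk]
    exact Env.totalSupport_nonneg hU.1 k

/-- feasibility claim in the proof of Theorem 3: in the environment where
every country other than `j` is an adversary of `j`, `i` is a friend of every country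
other than `j`, and there are no other relations, if `p_i + p_j ≤ Σ_{k ∉ {i,j}} p_k` then
there is a strategy matrix under which `j` is unsafe or precarious while every other
country survives. -/
theorem feasibility_of_demise {n : ℕ} (hn : 3 ≤ n) (i j : Fin n) (hij : i ≠ j)
    (E : Env n) (hpi : 0 < E.p i)
    (hpow : E.p i + E.p j ≤ ∑ k ∈ Finset.univ \ {i, j}, E.p k)
    (hF : ∀ k l, l ∈ E.F k ↔ (k = l ∨ (k = i ∧ l ≠ j) ∨ (l = i ∧ k ≠ j)))
    (hA : ∀ k l, l ∈ E.A k ↔ ((k = j ∧ l ≠ j) ∨ (l = j ∧ k ≠ j))) :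
    ∃ U, IsStrat E U ∧ totalSupport E U j ≤ totalThreat E U j ∧
      ∀ k, k ≠ j → Survives E U k :=
  feasibility_of_demise_general i j E hpow hA
end

section
/- (Lower bound on social welfare, used in Theorem 4) Assume additionally that t_ij^F(0) ≥ 0 and t_ij^A(0) ≥ 0 for every ordered pair (i,j) with j ≠ i. Then in any environment with n ≥ 1 countries, for every strategy matrix U, the total welfare satisfies Σ_{i∈N} f_i(U) ≥ (n−1) · min_{i∈N} t_ii^F(0) + min_{i∈N} t_ii^F(1). (The proof uses that at least one country survives under U, that each survivor i has f_i(U) ≥ t_ii^F(1), and that each non-survivor i has f_i(U) = t_ii^F(0).) -/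
open Finset

/-!
Every adversary relation is counted from both ends, so summing over all countries the total
threat equals the total power spent on adversaries, which is part of the total support. Hence
not every country can be unsafe. A surviving country collects at least `t_ii^F(1)` (its own
friend term, all other terms being nonnegative), and every country collects at least
`t_ii^F(0)`.
-/

theorem Finset.card_sub_one_mul_add_le_sum {ι : Type*} [Fintype ι] {f : ι → ℝ} {a b : ℝ}
    (i₀ : ι) (h₀ : b ≤ f i₀) (h : ∀ i, i ≠ i₀ → a ≤ f i) :
    ((Fintype.card ι : ℝ) - 1) * a + b ≤ ∑ i, f i := by
  classical
  have hrest : #(univ.erase i₀) • a ≤ ∑ i ∈ univ.erase i₀, f i :=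
    card_nsmul_le_sum _ _ _ fun i hi => h i (ne_of_mem_erase hi)
  rw [nsmul_eq_mul, cast_card_erase_of_mem (mem_univ i₀), card_univ] at hrest
  rw [← add_sum_erase _ _ (mem_univ i₀)]
  linarith

namespace Env

variable {n : ℕ} (E : Env n) {U : Fin n → Fin n → ℝ}

theorem sum_totalThreat_eq : ∑ i, totalThreat E U i = ∑ i, ∑ j ∈ E.A i, U i j :=
  sum_comm' fun i j => by simp [E.A_symm i j]

theorem sum_totalThreat_le_sum_totalSupport (hU : ∀ i j, 0 ≤ U i j) :
    ∑ i, totalThreat E U i ≤ ∑ i, totalSupport E U i := by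
  rw [sum_totalThreat_eq]
  exact sum_le_sum fun i _ => le_add_of_nonneg_left (sum_nonneg fun j _ => hU j i)

theorem exists_survives [Nonempty (Fin n)] (hU : ∀ i j, 0 ≤ U i j) : ∃ i, Survives E U i := by
  by_contra! hunsafe
  have hlt : ∑ i, totalSupport E U i < ∑ i, totalThreat E U i :=
    sum_lt_sum_of_nonempty univ_nonempty fun i _ => lt_of_not_ge (hunsafe i)
  exact hlt.not_ge (E.sum_totalThreat_le_sum_totalSupport hU)

theorem ne_of_mem_A {i j : Fin n} (hj : j ∈ E.A i) : j ≠ i := by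
  rintro rfl
  exact disjoint_left.mp (E.disj j) (E.self_friend j) hj

variable {tF1 tF0 tA1 tA0 : Fin n → Fin n → ℝ}

theorem utility_of_not_survives {i : Fin n} (hi : ¬Survives E U i) :
    utility E tF1 tF0 tA1 tA0 U i = tF0 i i :=
  if_pos (lt_of_not_ge hi)

theorem le_utility_of_survives (ht : ∀ k j, tF0 k j ≤ tF1 k j ∧ tA0 k j ≤ tA1 k j)
    (ht0 : ∀ k j, j ≠ k → 0 ≤ tF0 k j ∧ 0 ≤ tA0 k j) {i : Fin n} (hi : Survives E U i) :
    tF1 i i ≤ utility E tF1 tF0 tA1 tA0 U i := by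
  have hi : totalThreat E U i ≤ totalSupport E U i := hi
  rw [utility, if_neg hi.not_gt, ← add_sum_erase _ _ (E.self_friend i), if_pos hi]
  have hF : 0 ≤ ∑ j ∈ (E.F i).erase i,
      if totalThreat E U j ≤ totalSupport E U j then tF1 i j else tF0 i j :=
    sum_nonneg fun j hj => by
      have h0 := (ht0 i j (ne_of_mem_erase hj)).1
      split_ifs <;> linarith [(ht i j).1]
  have hA : 0 ≤ ∑ j ∈ E.A i,
      if totalSupport E U j ≤ totalThreat E U j then tA1 i j else tA0 i j :=
    sum_nonneg fun j hj => by
      have h0 := (ht0 i j (E.ne_of_mem_A hj)).2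
      split_ifs <;> linarith [(ht i j).2]
  linarith

theorem tF0_le_utility (ht : ∀ k j, tF0 k j ≤ tF1 k j ∧ tA0 k j ≤ tA1 k j)
    (ht0 : ∀ k j, j ≠ k → 0 ≤ tF0 k j ∧ 0 ≤ tA0 k j) (i : Fin n) :
    tF0 i i ≤ utility E tF1 tF0 tA1 tA0 U i := by
  by_cases hi : Survives E U i
  · exact (ht i i).1.trans (E.le_utility_of_survives ht ht0 hi)
  · exact (E.utility_of_not_survives hi).ge

end Env

/-- lower bound on social welfare, used in Theorem 4: if moreover
`t_ij^F(0) ≥ 0` and `t_ij^A(0) ≥ 0` for all `j ≠ i`, then in any environment with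
`n ≥ 1` countries the total welfare under any strategy matrix is at least
`(n-1) · min_i t_ii^F(0) + min_i t_ii^F(1)`. -/
theorem total_welfare_lower_bound {n : ℕ} (hn : 0 < n) (E : Env n)
    (tF1 tF0 tA1 tA0 : Fin n → Fin n → ℝ)
    (ht : ∀ k j, tF0 k j ≤ tF1 k j ∧ tA0 k j ≤ tA1 k j)
    (ht0 : ∀ k j, j ≠ k → 0 ≤ tF0 k j ∧ 0 ≤ tA0 k j)
    (U : Fin n → Fin n → ℝ) (hU : IsStrat E U) :
    ((n : ℝ) - 1) * (⨅ i : Fin n, tF0 i i) + (⨅ i : Fin n, tF1 i i) ≤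
      ∑ i, utility E tF1 tF0 tA1 tA0 U i := by
  have : Nonempty (Fin n) := ⟨⟨0, hn⟩⟩
  obtain ⟨i₀, hi₀⟩ := E.exists_survives hU.1
  have h := card_sub_one_mul_add_le_sum i₀
    ((ciInf_le (Set.finite_range fun i => tF1 i i).bddBelow i₀).trans
      (E.le_utility_of_survives ht ht0 hi₀))
    fun i _ => (ciInf_le (Set.finite_range fun i => tF0 i i).bddBelow i).trans
      (E.tF0_le_utility ht ht0 i)
  rwa [Fintype.card_fin] at h
end
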